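/- For every k ≥ 2 and every μ ⊆ {1, …, 2k}, the number of subsets η ⊆ {1, …, 2k} with ρₖ(e_η) ≡ ρₖ(e_μ) entrywise mod 2ℤ[i] and |η| even equals the number of such subsets η with |η| odd; that is, each equivalence class of Clifford actions on the 2-torsion points contains exactly as many generators e_η of even length as of odd length. -/

import Mathlib

open Matrix

namespace DiracSpinor

/-- The Gaussian integer `i`. -/
def gi : GaussianInt := ⟨0, 1⟩

/-- `E₁ = [[i,0],[0,−i]]`. -/
def E1 : Matrix (Fin 2) (Fin 2) GaussianInt := !![gi, 0; 0, -gi]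

/-- `E₂ = [[0,i],[i,0]]`. -/
def E2 : Matrix (Fin 2) (Fin 2) GaussianInt := !![0, gi; gi, 0]

/-- `B = [[0,−i],[i,0]]`. -/
def Bm : Matrix (Fin 2) (Fin 2) GaussianInt := !![0, -gi; gi, 0]

/-- The 2×2 identity matrix. -/
def I2 : Matrix (Fin 2) (Fin 2) GaussianInt := 1

/-- Kronecker product of square matrices, with the standard identification of the
index set `Fin m × Fin n` with `Fin (m*n)`. -/
def kron {m n : ℕ} (A : Matrix (Fin m) (Fin m) GaussianInt)
    (B : Matrix (Fin n) (Fin n) GaussianInt) :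
    Matrix (Fin (m * n)) (Fin (m * n)) GaussianInt :=
  Matrix.reindex finProdFinEquiv finProdFinEquiv (Matrix.kroneckerMap (· * ·) A B)

/-- Iterated Kronecker power `A^{⊗t}`. -/
def kronPow (A : Matrix (Fin 2) (Fin 2) GaussianInt) :
    (t : ℕ) → Matrix (Fin (2 ^ t)) (Fin (2 ^ t)) GaussianInt
  | 0 => 1
  | t + 1 => Matrix.reindex (finCongr (pow_succ 2 t).symm) (finCongr (pow_succ 2 t).symm)
      (kron (kronPow A t) A)

theorem sizeEq (k : ℕ) (i : Fin (2 * k)) :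
    2 ^ (k - 1 - i.val / 2) * 2 * 2 ^ (i.val / 2) = 2 ^ k := by
  have h1 : i.val < 2 * k := i.isLt
  have h2 : (k - 1 - i.val / 2) + 1 + i.val / 2 = k := by omega
  calc 2 ^ (k - 1 - i.val / 2) * 2 * 2 ^ (i.val / 2)
      = 2 ^ ((k - 1 - i.val / 2) + 1 + i.val / 2) := by rw [pow_add, pow_add, pow_one]
    _ = 2 ^ k := by rw [h2]

/-- `rhoVec k i` is `ρₖ(e_{i+1})`, the matrix representing the `(i+1)`-st vector generator
(`i : Fin (2*k)` is 0-based, so `i = 2j-2` encodes `e_{2j-1}` and `i = 2j-1` encodes `e_{2j}`):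
`ρₖ(e_{2j−1}) = I₂^{⊗(k−j)} ⊗ E₁ ⊗ B^{⊗(j−1)}` and `ρₖ(e_{2j}) = I₂^{⊗(k−j)} ⊗ E₂ ⊗ B^{⊗(j−1)}`. -/
def rhoVec (k : ℕ) (i : Fin (2 * k)) : Matrix (Fin (2 ^ k)) (Fin (2 ^ k)) GaussianInt :=
  Matrix.reindex (finCongr (sizeEq k i)) (finCongr (sizeEq k i))
    (kron (kron (kronPow I2 (k - 1 - i.val / 2)) (if i.val % 2 = 0 then E1 else E2))
      (kronPow Bm (i.val / 2)))

/-- `rho k μ` is `ρₖ(e_μ)`: the product of the `ρₖ(e_i)` for `i ∈ μ` taken in increasing order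
(`μ : Finset (Fin (2*k))` is the 0-based version of a subset of `{1, …, 2k}`). -/
def rho (k : ℕ) (μ : Finset (Fin (2 * k))) : Matrix (Fin (2 ^ k)) (Fin (2 ^ k)) GaussianInt :=
  ((μ.sort (· ≤ ·)).map (rhoVec k)).prod

/-- The quotient ring `ℤ[i]/2ℤ[i]`. -/
abbrev Rbar : Type := GaussianInt ⧸ Ideal.span ({2} : Set GaussianInt)

/-- Reduction `ℤ[i] → ℤ[i]/2ℤ[i]`. -/
def red : GaussianInt →+* Rbar := Ideal.Quotient.mk _

/-- `rhoBar k μ` is the entrywise reduction of `ρₖ(e_μ)` mod `2ℤ[i]`. -/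
def rhoBar (k : ℕ) (μ : Finset (Fin (2 * k))) : Matrix (Fin (2 ^ k)) (Fin (2 ^ k)) Rbar :=
  (rho k μ).map red

/-- The shape of a matrix: the 0–1 matrix recording the positions of nonzero entries. -/
def Sh {n : ℕ} (M : Matrix (Fin n) (Fin n) GaussianInt) : Matrix (Fin n) (Fin n) GaussianInt :=
  Matrix.of fun r s => if M r s = 0 then 0 else 1

/-- A matrix has real type if all its nonzero entries lie in `{1, −1}`. -/
def RealType {n : ℕ} (M : Matrix (Fin n) (Fin n) GaussianInt) : Prop :=
  ∀ r s, M r s ≠ 0 → M r s = 1 ∨ M r s = -1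

/-- A matrix has imaginary type if all its nonzero entries lie in `{i, −i}`. -/
def ImagType {n : ℕ} (M : Matrix (Fin n) (Fin n) GaussianInt) : Prop :=
  ∀ r s, M r s ≠ 0 → M r s = gi ∨ M r s = -gi


/-! ### Auxiliary machinery -/

open scoped symmDiff

/-- A matrix is a "monomial" with value `v` (mod 2) and xor-mask `m`:
its reduction mod 2 has entry `red v` at positions `(r, s)` with `r = s ^^^ m` and `0`
elsewhere. -/
def Mono {n : ℕ} (v : GaussianInt) (m : ℕ) (M : Matrix (Fin n) (Fin n) GaussianInt) : Prop :=
  ∀ r s : Fin n, red (M r s) = if r.val = s.val ^^^ m then red v else 0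

lemma red_eq_of_dvd {a b : GaussianInt} (h : 2 ∣ (a - b)) : red a = red b := by
  rw [red, Ideal.Quotient.mk_eq_mk_iff_sub_mem, Ideal.mem_span_singleton]
  exact h

lemma red_neg_gi : red (-gi) = red gi :=
  red_eq_of_dvd ⟨-gi, by ring⟩

lemma red_neg_one : red (-1) = red 1 :=
  red_eq_of_dvd ⟨-1, by ring⟩

lemma combine_xor {t : ℕ} {u u' v v' : ℕ} (hu : u < 2 ^ t) (hu' : u' < 2 ^ t) :
    (u + 2 ^ t * v) ^^^ (u' + 2 ^ t * v') = (u ^^^ u') + 2 ^ t * (v ^^^ v') := by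
  have hx : u ^^^ u' < 2 ^ t := Nat.xor_lt_two_pow hu hu'
  apply Nat.eq_of_testBit_eq
  intro j
  rw [Nat.add_comm u, Nat.add_comm u', Nat.add_comm (u ^^^ u'), Nat.testBit_xor,
    Nat.testBit_two_pow_mul_add _ hu, Nat.testBit_two_pow_mul_add _ hu',
    Nat.testBit_two_pow_mul_add _ hx]
  by_cases h : j < t <;> simp [h]

lemma pair_eq {q r2 x2 r1 x1 : ℕ} (h2 : r2 < q) (hx2 : x2 < q) :
    r2 + q * r1 = x2 + q * x1 ↔ (r2 = x2 ∧ r1 = x1) := by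
  constructor
  · intro h
    have hm : (r2 + q * r1) % q = (x2 + q * x1) % q := by rw [h]
    rw [Nat.add_mul_mod_self_left, Nat.add_mul_mod_self_left,
      Nat.mod_eq_of_lt h2, Nat.mod_eq_of_lt hx2] at hm
    have hq : 0 < q := Nat.lt_of_le_of_lt (Nat.zero_le r2) h2
    exact ⟨hm, Nat.eq_of_mul_eq_mul_left hq (by omega)⟩
  · rintro ⟨rfl, rfl⟩; rfl

lemma mono_kron {p b : ℕ} {v w : GaussianInt} {mA mB : ℕ}
    {M : Matrix (Fin p) (Fin p) GaussianInt}
    {N : Matrix (Fin (2 ^ b)) (Fin (2 ^ b)) GaussianInt}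
    (hMB : mB < 2 ^ b) (hM : Mono v mA M) (hN : Mono w mB N) :
    Mono (v * w) (mB + 2 ^ b * mA) (kron M N) := by
  intro r s
  obtain ⟨⟨r1, r2⟩, rfl⟩ := finProdFinEquiv.surjective r
  obtain ⟨⟨s1, s2⟩, rfl⟩ := finProdFinEquiv.surjective s
  have hk : kron M N (finProdFinEquiv (r1, r2)) (finProdFinEquiv (s1, s2))
      = M r1 s1 * N r2 s2 := by
    simp [kron, Matrix.kroneckerMap]
  rw [hk, _root_.map_mul, hM r1 s1, hN r2 s2]
  have hval : ∀ (a : Fin p) (c : Fin (2 ^ b)),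
      ((finProdFinEquiv (a, c) : Fin (p * 2 ^ b)) : ℕ) = c.val + 2 ^ b * a.val := by
    intro a c; rfl
  rw [hval, hval]
  have hc : (s2.val + 2 ^ b * s1.val) ^^^ (mB + 2 ^ b * mA)
      = (s2.val ^^^ mB) + 2 ^ b * (s1.val ^^^ mA) := combine_xor s2.isLt hMB
  rw [hc]
  simp only [pair_eq r2.isLt (Nat.xor_lt_two_pow s2.isLt hMB)]
  by_cases h1 : r1.val = s1.val ^^^ mA <;> by_cases h2 : r2.val = s2.val ^^^ mB <;>
    simp [h1, h2, _root_.map_mul]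

lemma mono_mul {t : ℕ} {v w : GaussianInt} {mA mB : ℕ}
    {M N : Matrix (Fin (2 ^ t)) (Fin (2 ^ t)) GaussianInt}
    (hmA : mA < 2 ^ t) (hmB : mB < 2 ^ t)
    (hM : Mono v mA M) (hN : Mono w mB N) :
    Mono (v * w) (mA ^^^ mB) (M * N) := by
  intro r s
  set t0 : Fin (2 ^ t) := ⟨s.val ^^^ mB, Nat.xor_lt_two_pow s.isLt hmB⟩ with ht0
  have : red ((M * N) r s) = ∑ x : Fin (2 ^ t), red (M r x) * red (N x s) := by
    rw [Matrix.mul_apply, map_sum]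
    exact Finset.sum_congr rfl fun x _ => map_mul red _ _
  rw [this]
  rw [Finset.sum_eq_single t0 ?h1 ?h2]
  · rw [hM r t0, hN t0 s, if_pos rfl]
    have hxor : (t0 : ℕ) ^^^ mA = s.val ^^^ (mA ^^^ mB) := by
      simp only [ht0]
      rw [Nat.xor_assoc, Nat.xor_comm mB mA]
    by_cases h : r.val = s.val ^^^ (mA ^^^ mB)
    · rw [if_pos (hxor ▸ h), if_pos h, _root_.map_mul]
    · rw [if_neg (fun hc => h (hxor ▸ hc)), if_neg h, zero_mul]
  case h1 =>
    intro x _ hx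
    rw [hN x s, if_neg, mul_zero]
    intro hc
    exact hx (Fin.ext hc)
  case h2 =>
    intro h
    exact absurd (Finset.mem_univ t0) h

lemma mono_reindex {n n' : ℕ} {v : GaussianInt} {m : ℕ} (h : n = n')
    {M : Matrix (Fin n) (Fin n) GaussianInt} (hM : Mono v m M) :
    Mono v m (Matrix.reindex (finCongr h) (finCongr h) M) := by
  intro r s
  have := hM ((finCongr h).symm r) ((finCongr h).symm s)
  simpa using this

lemma mono_one {n : ℕ} : Mono 1 0 (1 : Matrix (Fin n) (Fin n) GaussianInt) := by
  intro r s
  rw [Matrix.one_apply]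
  simp only [Nat.xor_zero]
  by_cases h : r = s
  · subst h; simp
  · rw [if_neg h, if_neg (fun hc => h (Fin.ext hc)), map_zero]

lemma mono_E1 : Mono gi 0 E1 := by
  intro r s
  fin_cases r <;> fin_cases s <;>
    simp [E1, red_neg_gi]

lemma mono_E2 : Mono gi 1 E2 := by
  intro r s
  fin_cases r <;> fin_cases s <;>
    simp [E2, red_neg_gi]

lemma mono_Bm : Mono gi 1 Bm := by
  intro r s
  fin_cases r <;> fin_cases s <;>
    simp [Bm, red_neg_gi]

lemma mono_kronPow_I2 (t : ℕ) : Mono 1 0 (kronPow I2 t) := by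
  induction t with
  | zero => exact mono_one
  | succ t ih =>
    have h := mono_kron (b := 1) (mA := 0) (mB := 0) (by norm_num) ih mono_one
    have h2 := mono_reindex (pow_succ 2 t).symm h
    simpa [kronPow, I2] using h2

lemma mono_kronPow_Bm (t : ℕ) : Mono (gi ^ t) (2 ^ t - 1) (kronPow Bm t) := by
  induction t with
  | zero => simpa [kronPow] using mono_one
  | succ t ih =>
    have h := mono_kron (b := 1) (mB := 1) (by norm_num) ih mono_Bm
    have h2 := mono_reindex (pow_succ 2 t).symm h
    have hm : 1 + 2 ^ 1 * (2 ^ t - 1) = 2 ^ (t + 1) - 1 := by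
      have h1 : 1 ≤ 2 ^ t := Nat.one_le_two_pow
      have h3 : 2 ^ (t + 1) = 2 ^ t * 2 := pow_succ 2 t
      omega
    rw [hm, ← pow_succ] at h2
    exact h2

lemma mono_rhoVec (k : ℕ) (i : Fin (2 * k)) :
    Mono (gi ^ (i.val / 2 + 1))
      ((2 ^ (i.val / 2) - 1) + 2 ^ (i.val / 2) * (i.val % 2)) (rhoVec k i) := by
  have hX : Mono gi (i.val % 2) (if i.val % 2 = 0 then E1 else E2) := by
    by_cases h : i.val % 2 = 0
    · rw [if_pos h, h]; exact mono_E1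
    · rw [if_neg h, (Nat.mod_two_eq_zero_or_one i.val).resolve_left h]
      exact mono_E2
  have hin := mono_kron (b := 1) (mB := i.val % 2) (by omega) (mono_kronPow_I2 (k - 1 - i.val / 2)) hX
  have hout := mono_kron (b := i.val / 2)
    (Nat.sub_lt (Nat.two_pow_pos _) one_pos) hin (mono_kronPow_Bm (i.val / 2))
  have h2 := mono_reindex (sizeEq k i) hout
  rw [rhoVec]
  have hv : 1 * gi * gi ^ (i.val / 2) = gi ^ (i.val / 2 + 1) := by
    rw [one_mul, mul_comm, ← pow_succ]
  have hm : (2 ^ (i.val / 2) - 1) + 2 ^ (i.val / 2) * (i.val % 2 + 2 ^ 1 * 0)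
      = (2 ^ (i.val / 2) - 1) + 2 ^ (i.val / 2) * (i.val % 2) := by ring_nf
  rw [hv, hm] at h2
  exact h2

lemma mask_lt (k : ℕ) (i : Fin (2 * k)) :
    (2 ^ (i.val / 2) - 1) + 2 ^ (i.val / 2) * (i.val % 2) < 2 ^ k := by
  have hb : i.val / 2 + 1 ≤ k := by omega
  have h1 : 2 ^ (i.val / 2 + 1) ≤ 2 ^ k := Nat.pow_le_pow_right (by norm_num) hb
  have h2 : 2 ^ (i.val / 2 + 1) = 2 ^ (i.val / 2) * 2 := pow_succ 2 _
  have h3 : 1 ≤ 2 ^ (i.val / 2) := Nat.one_le_two_pow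
  have h5 : 2 ^ (i.val / 2) * (i.val % 2) ≤ 2 ^ (i.val / 2) := by
    calc 2 ^ (i.val / 2) * (i.val % 2) ≤ 2 ^ (i.val / 2) * 1 :=
          Nat.mul_le_mul_left _ (by omega)
      _ = 2 ^ (i.val / 2) := Nat.mul_one _
  omega

lemma mono_ext {n : ℕ} {v v' : GaussianInt} {m m' : ℕ}
    {M M' : Matrix (Fin n) (Fin n) GaussianInt}
    (h : Mono v m M) (h' : Mono v' m' M') (hv : red v = red v') (hm : m = m') :
    M.map red = M'.map red := by
  ext r s
  rw [Matrix.map_apply, Matrix.map_apply, h, h', hv, hm]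

lemma mono_map_eq_one {n : ℕ} {v : GaussianInt} {M : Matrix (Fin n) (Fin n) GaussianInt}
    (h : Mono v 0 M) (hv : red v = 1) : M.map red = 1 := by
  ext r s
  rw [Matrix.map_apply, h, Matrix.one_apply]
  simp only [Nat.xor_zero, hv]
  by_cases hrs : r = s
  · subst hrs; simp
  · rw [if_neg (fun hc => hrs (Fin.ext hc)), if_neg hrs]

/-- The reduction of `ρₖ(e_i)` mod 2. -/
def gbar (k : ℕ) (i : Fin (2 * k)) : Matrix (Fin (2 ^ k)) (Fin (2 ^ k)) Rbar :=
  (rhoVec k i).map red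

lemma red_gi_sq : red (gi * gi) = 1 := by
  have h : gi * gi = -1 := by decide
  rw [h, red_neg_one, _root_.map_one]

lemma gbar_comm (k : ℕ) (i j : Fin (2 * k)) : Commute (gbar k i) (gbar k j) := by
  have h1 := mono_mul (mask_lt k i) (mask_lt k j) (mono_rhoVec k i) (mono_rhoVec k j)
  have h2 := mono_mul (mask_lt k j) (mask_lt k i) (mono_rhoVec k j) (mono_rhoVec k i)
  have h3 := mono_ext h1 h2 (by rw [mul_comm]) (Nat.xor_comm _ _)
  show gbar k i * gbar k j = gbar k j * gbar k i
  calc gbar k i * gbar k j = (rhoVec k i * rhoVec k j).map red := Matrix.map_mul.symm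
    _ = (rhoVec k j * rhoVec k i).map red := h3
    _ = gbar k j * gbar k i := Matrix.map_mul

lemma gbar_sq (k : ℕ) (i : Fin (2 * k)) : gbar k i * gbar k i = 1 := by
  have h1 := mono_mul (mask_lt k i) (mask_lt k i) (mono_rhoVec k i) (mono_rhoVec k i)
  rw [Nat.xor_self] at h1
  have hv : red (gi ^ (i.val / 2 + 1) * gi ^ (i.val / 2 + 1)) = 1 := by
    rw [← mul_pow, map_pow, red_gi_sq, one_pow]
  calc gbar k i * gbar k i = (rhoVec k i * rhoVec k i).map red := Matrix.map_mul.symm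
    _ = 1 := mono_map_eq_one h1 hv

section NoncommProd

variable {ι β : Type*} [DecidableEq ι] [Monoid β] {f : ι → β}

lemma F_split (hc : ∀ i j, Commute (f i) (f j)) {u v w : Finset ι}
    (h : v ∪ w = u) (hd : Disjoint v w) :
    u.noncommProd f (fun a _ b _ _ => hc a b)
      = v.noncommProd f (fun a _ b _ _ => hc a b)
        * w.noncommProd f (fun a _ b _ _ => hc a b) := by
  subst h
  exact Finset.noncommProd_union_of_disjoint hd f _

lemma F_sq (hc : ∀ i j, Commute (f i) (f j)) (hsq : ∀ i, f i * f i = 1)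
    (s : Finset ι) :
    s.noncommProd f (fun a _ b _ _ => hc a b)
      * s.noncommProd f (fun a _ b _ _ => hc a b) = 1 := by
  induction s using Finset.induction_on with
  | empty => erw [Finset.noncommProd_empty, one_mul]
  | @insert a s ha ih =>
    erw [Finset.noncommProd_insert_of_notMem _ _ _ _ ha]
    set P := s.noncommProd f (fun a _ b _ _ => hc a b) with hP
    have hcp : Commute (f a) P :=
      Finset.noncommProd_commute _ _ _ _ (fun x _ => hc a x)
    have key : f a * P * (f a * P) = f a * f a * (P * P) := by
      rw [mul_assoc (f a) P (f a * P), ← mul_assoc P (f a) P, ← hcp.eq,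
        mul_assoc (f a) P P, ← mul_assoc (f a) (f a) (P * P), mul_assoc (f a) (f a) (P * P)]
    rw [key, hsq a, ih, one_mul]

lemma F_commutes (hc : ∀ i j, Commute (f i) (f j)) (s t : Finset ι) :
    Commute (s.noncommProd f (fun a _ b _ _ => hc a b))
      (t.noncommProd f (fun a _ b _ _ => hc a b)) := by
  apply Finset.noncommProd_commute
  intro x _
  exact (Finset.noncommProd_commute _ _ _ _ (fun y _ => hc x y)).symm

lemma F_symmDiff (hc : ∀ i j, Commute (f i) (f j)) (hsq : ∀ i, f i * f i = 1)
    (s t : Finset ι) :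
    (s ∆ t).noncommProd f (fun a _ b _ _ => hc a b)
      = s.noncommProd f (fun a _ b _ _ => hc a b)
        * t.noncommProd f (fun a _ b _ _ => hc a b) := by
  have hs : s.noncommProd f (fun a _ b _ _ => hc a b)
      = (s \ t).noncommProd f (fun a _ b _ _ => hc a b)
        * (s ∩ t).noncommProd f (fun a _ b _ _ => hc a b) :=
    F_split hc (Finset.sdiff_union_inter s t) (Finset.disjoint_sdiff_inter s t)
  have ht : t.noncommProd f (fun a _ b _ _ => hc a b)
      = (s ∩ t).noncommProd f (fun a _ b _ _ => hc a b)
        * (t \ s).noncommProd f (fun a _ b _ _ => hc a b) := by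
    have h1 : (t ∩ s) ∪ (t \ s) = t := by
      rw [Finset.union_comm]
      exact Finset.sdiff_union_inter t s
    have h2 := F_split hc h1 (Finset.disjoint_sdiff_inter t s).symm
    rw [Finset.inter_comm t s] at h2
    exact h2
  have hst : (s ∆ t).noncommProd f (fun a _ b _ _ => hc a b)
      = (s \ t).noncommProd f (fun a _ b _ _ => hc a b)
        * (t \ s).noncommProd f (fun a _ b _ _ => hc a b) := by
    apply F_split hc
    · rw [symmDiff_def, Finset.sup_eq_union]
    · exact disjoint_sdiff_sdiff
  set A := (s \ t).noncommProd f (fun a _ b _ _ => hc a b)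
  set C := (s ∩ t).noncommProd f (fun a _ b _ _ => hc a b)
  set B := (t \ s).noncommProd f (fun a _ b _ _ => hc a b)
  have hCC : C * C = 1 := F_sq hc hsq _
  rw [hs, ht, hst, mul_assoc A C (C * B), ← mul_assoc C C B, hCC, one_mul]

lemma multiset_noncommProd_eq {m : Multiset β} {l : List β} (h : m = ↑l) (comm) :
    m.noncommProd comm = l.prod := by
  subst h
  exact Multiset.noncommProd_coe l comm

lemma noncommProd_eq_sorted [LinearOrder ι] (s : Finset ι)
    (hc : ∀ i j, Commute (f i) (f j)) :
    s.noncommProd f (fun a _ b _ _ => hc a b) = ((s.sort (· ≤ ·)).map f).prod := by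
  show (s.1.map f).noncommProd _ = _
  apply multiset_noncommProd_eq
  rw [← Multiset.map_coe, Finset.sort_eq]

end NoncommProd

lemma card_symmDiff_mod_two {ι : Type*} [DecidableEq ι] (s t : Finset ι) :
    (s ∆ t).card % 2 = (s.card + t.card) % 2 := by
  have h1 : (s ∆ t).card = (s \ t).card + (t \ s).card := by
    rw [symmDiff_def, Finset.sup_eq_union]
    exact Finset.card_union_of_disjoint disjoint_sdiff_sdiff
  have h2 : (s \ t).card + (s ∩ t).card = s.card := by
    rw [← Finset.card_union_of_disjoint (Finset.disjoint_sdiff_inter s t),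
      Finset.sdiff_union_inter]
  have h3 : (t \ s).card + (t ∩ s).card = t.card := by
    rw [← Finset.card_union_of_disjoint (Finset.disjoint_sdiff_inter t s),
      Finset.sdiff_union_inter]
  have h4 : (t ∩ s).card = (s ∩ t).card := by rw [Finset.inter_comm]
  omega

lemma gbar_triple (k : ℕ) (h0 : (0:ℕ) < 2 * k) (h1 : (1:ℕ) < 2 * k)
    (h2 : (2:ℕ) < 2 * k) :
    gbar k ⟨0, h0⟩ * gbar k ⟨1, h1⟩ * gbar k ⟨2, h2⟩ = 1 := by
  have m0 := mono_rhoVec k ⟨0, h0⟩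
  have m1 := mono_rhoVec k ⟨1, h1⟩
  have m2 := mono_rhoVec k ⟨2, h2⟩
  norm_num at m0 m1 m2
  have l0 : (0:ℕ) < 2 ^ k := Nat.two_pow_pos k
  have l1 : (1:ℕ) < 2 ^ k := by
    have : (2:ℕ) ^ 1 ≤ 2 ^ k := Nat.pow_le_pow_right (by norm_num) (by omega)
    omega
  have h01 := mono_mul l0 l1 m0 m1
  have h012 := mono_mul (Nat.xor_lt_two_pow l0 l1) l1 h01 m2
  have hm : (0 ^^^ 1) ^^^ 1 = 0 := by decide
  rw [hm] at h012
  have hv : red (gi * gi * gi ^ 2) = 1 := by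
    rw [_root_.map_mul, red_gi_sq, one_mul, pow_two, red_gi_sq]
  have hone := mono_map_eq_one h012 hv
  calc gbar k ⟨0,h0⟩ * gbar k ⟨1,h1⟩ * gbar k ⟨2,h2⟩
      = (rhoVec k ⟨0,h0⟩ * rhoVec k ⟨1,h1⟩ * rhoVec k ⟨2,h2⟩).map red := by
        rw [Matrix.map_mul, Matrix.map_mul]; rfl
    _ = 1 := hone

lemma rhoBar_eq_noncommProd (k : ℕ) (μ : Finset (Fin (2 * k))) :
    rhoBar k μ = μ.noncommProd (gbar k) (fun a _ b _ _ => gbar_comm k a b) := by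
  rw [noncommProd_eq_sorted μ (gbar_comm k), rhoBar, rho]
  have key : ∀ l : List (Fin (2 * k)),
      ((l.map (rhoVec k)).prod).map red = (l.map (gbar k)).prod := by
    intro l
    induction l with
    | nil =>
      simp only [List.map_nil, List.prod_nil]
      exact Matrix.map_one _ (map_zero red) (_root_.map_one red)
    | cons a l ih =>
      simp only [List.map_cons, List.prod_cons, Matrix.map_mul, ih]
      rfl
  exact key _

/-- Each equivalence class of Clifford actions on the 2-torsion points contains exactly as
many generators `e_η` of even length as of odd length. -/
theorem equiv_class_even_odd (k : ℕ) (hk : 2 ≤ k) (μ : Finset (Fin (2 * k))) :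
    Set.ncard {η : Finset (Fin (2 * k)) | rhoBar k η = rhoBar k μ ∧ Even η.card} =
      Set.ncard {η : Finset (Fin (2 * k)) | rhoBar k η = rhoBar k μ ∧ Odd η.card} := by
  have h0 : (0:ℕ) < 2 * k := by omega
  have h1 : (1:ℕ) < 2 * k := by omega
  have h2 : (2:ℕ) < 2 * k := by omega
  set τ : Finset (Fin (2 * k)) := {⟨0, h0⟩, ⟨1, h1⟩, ⟨2, h2⟩} with hτ
  have hn01 : (⟨0, h0⟩ : Fin (2 * k)) ∉ ({⟨1, h1⟩, ⟨2, h2⟩} : Finset (Fin (2 * k))) := by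
    simp [Fin.ext_iff]
  have hn12 : (⟨1, h1⟩ : Fin (2 * k)) ∉ ({⟨2, h2⟩} : Finset (Fin (2 * k))) := by
    simp [Fin.ext_iff]
  have hcard : τ.card = 3 := by
    rw [hτ, Finset.card_insert_of_notMem hn01, Finset.card_insert_of_notMem hn12,
      Finset.card_singleton]
  have hτprod : τ.noncommProd (gbar k) (fun a _ b _ _ => gbar_comm k a b) = 1 := by
    erw [hτ, Finset.noncommProd_insert_of_notMem _ _ _ _ hn01,
      Finset.noncommProd_insert_of_notMem _ _ _ _ hn12,
      Finset.noncommProd_singleton, ← mul_assoc]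
    exact gbar_triple k h0 h1 h2
  have hrho : ∀ η, rhoBar k (η ∆ τ) = rhoBar k η := by
    intro η
    rw [rhoBar_eq_noncommProd, rhoBar_eq_noncommProd,
      F_symmDiff (gbar_comm k) (gbar_sq k) η τ, hτprod, mul_one]
  have hparity : ∀ η : Finset (Fin (2 * k)), (η ∆ τ).card % 2 = (η.card + 3) % 2 := by
    intro η
    rw [card_symmDiff_mod_two, hcard]
  have hcancel : ∀ η : Finset (Fin (2 * k)), (η ∆ τ) ∆ τ = η := fun η =>
    symmDiff_symmDiff_cancel_right τ η
  have hinj : Function.Injective (fun η : Finset (Fin (2 * k)) => η ∆ τ) := by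
    intro a b hab
    have h := congrArg (fun x : Finset (Fin (2 * k)) => x ∆ τ) hab
    simpa only [hcancel] using h
  have himg : (fun η : Finset (Fin (2 * k)) => η ∆ τ) ''
      {η | rhoBar k η = rhoBar k μ ∧ Even η.card}
      = {η | rhoBar k η = rhoBar k μ ∧ Odd η.card} := by
    ext η
    simp only [Set.mem_image, Set.mem_setOf_eq]
    constructor
    · rintro ⟨x, ⟨hx1, hx2⟩, rfl⟩
      refine ⟨by rw [hrho x, hx1], ?_⟩
      have hp := hparity x
      rw [Nat.even_iff] at hx2
      rw [Nat.odd_iff]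
      omega
    · rintro ⟨hη1, hη2⟩
      refine ⟨η ∆ τ, ⟨?_, ?_⟩, hcancel η⟩
      · rw [hrho η, hη1]
      · have hp := hparity η
        rw [Nat.odd_iff] at hη2
        rw [Nat.even_iff]
        omega
  rw [← himg, Set.ncard_image_of_injective _ hinj]

end DiracSpinor
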